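/- (Comparison principle) Suppose f is quasimonotone: for all (u, p), ∂f_i/∂u_j(u, p) ≥ 0 whenever i ≠ j, and for each i the component f_i(u, p) depends on p only through p_i (i.e. ∂f_i/∂p_j = 0 for j ≠ i). Let T > 0 and let u, v : ℝ × [0, T] → ℝ^N be continuous, C¹ in t and C² in x on ℝ × (0, T], bounded together with their spatial derivatives, and satisfy componentwise u_t − A u_xx − f(u, u_x) ≤ 0 and v_t − A v_xx − f(v, v_x) ≥ 0 on ℝ × (0, T]. If u_i(x, 0) ≤ v_i(x, 0) for all x ∈ ℝ and all i = 1, …, N, then u_i(x, t) ≤ v_i(x, t) for all x ∈ ℝ, t ∈ [0, T], and all i. -/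

import Mathlib

/-!
Fix `ε > 0` and compare `u - v` with the barrier `φ = ε e^{Kt} (1 + x²)`, where
`K = 2 ∑ᵢ Aᵢᵢ + L + 1` and `L` is a one-sided Lipschitz constant of `f` on the bounded range of
`(u, u_x)` and `(v, v_x)`. Since `u - v` is bounded and `φ` grows quadratically in `x`, the set
where some component of `u - v` reaches `φ` is compact; if it is nonempty it contains a point
`(x₀, t₀)` of least time, with `t₀ > 0` and `u_k - v_k = φ` there. As a function of `x`,
`u_k - v_k - φ` is maximal at `x₀`, and as a function of `t` it increases up to `t₀`, so
`(u - v)_x = φ_x`, `(u - v)_xx ≤ φ_xx` and `(u - v)_t ≥ Kφ` at that point. Quasimonotonicity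
bounds `f_k(u, u_x) - f_k(v, v_x)` by `Lφ`: raising the other components of `u` until
`u - v ≡ φ` can only increase `f_k`, and `f_k` sees only the `k`-th component of the gradient.
The differential inequalities then give `Kφ ≤ (K - 1)φ`. Letting `ε → 0` yields `u ≤ v`.
-/

open Matrix Filter Topology

noncomputable def Du {N : ℕ} (f : (Fin N → ℝ) → (Fin N → ℝ) → Fin N → ℝ)
    (u p : Fin N → ℝ) : Matrix (Fin N) (Fin N) ℝ :=
  fun i j => fderiv ℝ (fun u' => f u' p i) u (Pi.single j 1)

noncomputable def Dp {N : ℕ} (f : (Fin N → ℝ) → (Fin N → ℝ) → Fin N → ℝ)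
    (u p : Fin N → ℝ) : Matrix (Fin N) (Fin N) ℝ :=
  fun i j => fderiv ℝ (fun p' => f u p' i) p (Pi.single j 1)

open Set Real

theorem IsLocalMax.deriv_deriv_nonpos {g : ℝ → ℝ} {a : ℝ} (h : IsLocalMax g a)
    (hc : ContinuousAt g a) : deriv (deriv g) a ≤ 0 := by
  by_contra! hpos
  -- the second derivative test would make `a` a local minimum too, so `g` is locally constant
  have hconst : g =ᶠ[𝓝 a] fun _ => g a := by
    filter_upwards [h, isLocalMin_of_deriv_deriv_pos hpos h.deriv_eq_zero hc] with x hmax hmin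
    exact le_antisymm hmax hmin
  have hderiv : deriv g =ᶠ[𝓝 a] fun _ => 0 := by
    filter_upwards [hconst.eventuallyEq_nhds] with x hx
    rw [hx.deriv_eq, deriv_const]
  simp [hderiv.deriv_eq] at hpos

theorem IsLocalMax.hasDerivAt_hasDerivAt_nonpos {g g' : ℝ → ℝ} {g'' a : ℝ}
    (h : IsLocalMax g a) (hg : ∀ x, HasDerivAt g (g' x) x) (hg' : HasDerivAt g' g'' a) :
    g'' ≤ 0 := by
  have hderiv : deriv g = g' := funext fun x => (hg x).deriv
  rw [← hg'.deriv, ← hderiv]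
  exact h.deriv_deriv_nonpos (hg a).continuousAt

theorem HasDerivAt.nonneg_of_le_left {g : ℝ → ℝ} {g' a b : ℝ} (hg : HasDerivAt g g' a)
    (hb : b < a) (hle : ∀ t ∈ Ico b a, g t ≤ g a) : 0 ≤ g' := by
  refine ge_of_tendsto ((hasDerivAt_iff_tendsto_slope.mp hg).mono_left (nhdsLT_le_nhdsNE a)) ?_
  filter_upwards [Ico_mem_nhdsLT hb] with t ht
  rw [slope_def_field]
  exact div_nonneg_of_nonpos (sub_nonpos.2 (hle t ht)) (sub_nonpos.2 ht.2.le)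

theorem two_mul_abs_le_one_add_sq (x : ℝ) : 2 * |x| ≤ 1 + x ^ 2 := by
  nlinarith [two_mul_le_add_sq |x| 1, sq_abs x]

section VectorValued

variable {ι : Type*} [Fintype ι] {U V : ℝ → ι → ℝ} {i : ι}

theorem ContDiff.hasDerivAt_apply (hU : ContDiff ℝ 2 U) (i : ι) (x : ℝ) :
    HasDerivAt (fun y => U y i) (deriv U x i) x ∧
      HasDerivAt (fun y => deriv U y i) (deriv (deriv U) x i) x := by
  have hU' : ContDiff ℝ 1 (deriv U) := hU.iterate_deriv' 1 1
  exact ⟨hasDerivAt_pi.1 ((hU.differentiable two_ne_zero) x).hasDerivAt i,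
    hasDerivAt_pi.1 ((hU'.differentiable one_ne_zero) x).hasDerivAt i⟩

theorem deriv_sub_of_isMax_sub_parabola (hU : ContDiff ℝ 2 U) (hV : ContDiff ℝ 2 V) {c a : ℝ}
    (hmax : ∀ x, U x i - V x i - c * (1 + x ^ 2) ≤ U a i - V a i - c * (1 + a ^ 2)) :
    deriv U a i - deriv V a i = c * (2 * a) ∧
      deriv (deriv U) a i - deriv (deriv V) a i ≤ 2 * c := by
  have hG : ∀ x, HasDerivAt (fun y => U y i - V y i - c * (1 + y ^ 2))
      (deriv U x i - deriv V x i - c * (2 * x)) x := fun x => by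
    refine ((hU.hasDerivAt_apply i x).1.sub (hV.hasDerivAt_apply i x).1).sub ?_
    simpa using ((hasDerivAt_pow 2 x).const_add 1).const_mul c
  have hG' : HasDerivAt (fun x => deriv U x i - deriv V x i - c * (2 * x))
      (deriv (deriv U) a i - deriv (deriv V) a i - c * 2) a := by
    refine ((hU.hasDerivAt_apply i a).2.sub (hV.hasDerivAt_apply i a).2).sub ?_
    simpa using ((hasDerivAt_id a).const_mul 2).const_mul c
  have hloc : IsLocalMax (fun y => U y i - V y i - c * (1 + y ^ 2)) a :=
    Eventually.of_forall hmax
  exact ⟨by linarith [hloc.hasDerivAt_eq_zero (hG a)],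
    by linarith [hloc.hasDerivAt_hasDerivAt_nonpos hG hG']⟩

theorem le_deriv_sub_of_le_left {φ : ℝ → ℝ} {φ' a b : ℝ} (hφ : HasDerivAt φ φ' a)
    (hU : DifferentiableAt ℝ U a) (hV : DifferentiableAt ℝ V a) (hb : b < a)
    (hle : ∀ t ∈ Ico b a, U t i - V t i ≤ φ t) (heq : U a i - V a i = φ a) :
    φ' ≤ deriv U a i - deriv V a i := by
  have hg := ((hasDerivAt_pi.1 hU.hasDerivAt i).sub (hasDerivAt_pi.1 hV.hasDerivAt i)).sub hφ
  linarith [hg.nonneg_of_le_left hb fun t ht => by simp only [Pi.sub_apply]; linarith [hle t ht]]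

end VectorValued

section LineDerivative

variable {E : Type*} [NormedAddCommGroup E] [NormedSpace ℝ E] {g : E → ℝ}

theorem Differentiable.hasDerivAt_comp_add_smul (hg : Differentiable ℝ g) (x h : E) (t : ℝ) :
    HasDerivAt (fun t : ℝ => g (x + t • h)) (fderiv ℝ g (x + t • h) h) t := by
  have hline : HasDerivAt (fun t : ℝ => x + t • h) h t := by
    simpa using ((hasDerivAt_id t).smul_const h).const_add x
  exact (hg _).hasFDerivAt.comp_hasDerivAt t hline

theorem Differentiable.le_add_of_fderiv_apply_nonneg (hg : Differentiable ℝ g) {x h : E}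
    (hpos : ∀ t : ℝ, 0 ≤ fderiv ℝ g (x + t • h) h) : g x ≤ g (x + h) := by
  have hγ := hg.hasDerivAt_comp_add_smul x h
  simpa using monotone_of_deriv_nonneg (fun t => (hγ t).differentiableAt)
    (fun t => (hγ t).deriv ▸ hpos t) zero_le_one

theorem Differentiable.eq_add_of_fderiv_apply_eq_zero (hg : Differentiable ℝ g) {x h : E}
    (hzero : ∀ t : ℝ, fderiv ℝ g (x + t • h) h = 0) : g x = g (x + h) := by
  have hγ := hg.hasDerivAt_comp_add_smul x h
  simpa using is_const_of_deriv_eq_zero (fun t => (hγ t).differentiableAt)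
    (fun t => (hγ t).deriv ▸ hzero t) 0 1

end LineDerivative

section PartialDerivatives

variable {ι : Type*} [Fintype ι] [DecidableEq ι] {g : (ι → ℝ) → ℝ}

theorem ContinuousLinearMap.apply_eq_sum_single (ℓ : (ι → ℝ) →L[ℝ] ℝ) (h : ι → ℝ) :
    ℓ h = ∑ j, h j * ℓ (Pi.single j 1) := by
  conv_lhs => rw [← Finset.univ_sum_single h, map_sum]
  refine Finset.sum_congr rfl fun j _ => ?_
  rw [← smul_eq_mul, ← map_smul, ← Pi.single_smul, smul_eq_mul, mul_one]

theorem Differentiable.le_add_of_fderiv_single_nonneg (hg : Differentiable ℝ g) {i : ι}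
    (hmono : ∀ y j, j ≠ i → 0 ≤ fderiv ℝ g y (Pi.single j 1)) {x h : ι → ℝ} (hh : 0 ≤ h)
    (hi : h i = 0) : g x ≤ g (x + h) := by
  refine hg.le_add_of_fderiv_apply_nonneg fun t => ?_
  rw [ContinuousLinearMap.apply_eq_sum_single]
  refine Finset.sum_nonneg fun j _ => ?_
  rcases eq_or_ne j i with rfl | hj
  · simp [hi]
  · exact mul_nonneg (hh j) (hmono _ j hj)

theorem Differentiable.eq_of_fderiv_single_eq_zero (hg : Differentiable ℝ g) {i : ι}
    (hzero : ∀ y j, j ≠ i → fderiv ℝ g y (Pi.single j 1) = 0) {x y : ι → ℝ}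
    (hxy : x i = y i) : g x = g y := by
  have key := hg.eq_add_of_fderiv_apply_eq_zero (x := x) (h := y - x) fun t => by
    rw [ContinuousLinearMap.apply_eq_sum_single]
    refine Finset.sum_eq_zero fun j _ => ?_
    rcases eq_or_ne j i with rfl | hj
    · simp [hxy]
    · simp [hzero _ j hj]
  simpa using key

end PartialDerivatives

theorem apply_le_of_quasimonotone {N : ℕ} {f : (Fin N → ℝ) → (Fin N → ℝ) → Fin N → ℝ}
    (hf : Differentiable ℝ (fun q : (Fin N → ℝ) × (Fin N → ℝ) => f q.1 q.2))
    (hquasi : ∀ (w p : Fin N → ℝ) (i j : Fin N), i ≠ j →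
      0 ≤ Du f w p i j ∧ Dp f w p i j = 0) {a₁ b₁ a₂ b₂ : Fin N → ℝ} {i : Fin N}
    (hmax : ∀ j, a₁ j - a₂ j ≤ a₁ i - a₂ i) :
    f a₁ b₁ i ≤ f (a₂ + fun _ => a₁ i - a₂ i) (b₂ + Pi.single i (b₁ i - b₂ i)) i := by
  set a := a₂ + fun _ => a₁ i - a₂ i
  have hraise : f a₁ b₁ i ≤ f a b₁ i := by
    have hd : Differentiable ℝ (fun a => f a b₁ i) := fun a =>
      differentiableAt_pi.1 (hf.comp (differentiable_id.prodMk (differentiable_const b₁)) a) i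
    convert hd.le_add_of_fderiv_single_nonneg (fun y j hj => (hquasi y b₁ i j hj.symm).1)
      (x := a₁) (h := fun j => (a₁ i - a₂ i) - (a₁ j - a₂ j)) (fun j => sub_nonneg.2 (hmax j))
      (sub_self _) using 2
    ext j
    simp only [a, Pi.add_apply]
    ring
  have hd : Differentiable ℝ (fun b => f a b i) := fun b =>
    differentiableAt_pi.1 (hf.comp ((differentiable_const a).prodMk differentiable_id) b) i
  exact hraise.trans_eq
    (hd.eq_of_fderiv_single_eq_zero (fun y j hj => (hquasi a y i j hj.symm).2) (by simp))

theorem exists_sub_le_of_quasimonotone {N : ℕ} {f : (Fin N → ℝ) → (Fin N → ℝ) → Fin N → ℝ}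
    (hf : ContDiff ℝ 1 (fun q : (Fin N → ℝ) × (Fin N → ℝ) => f q.1 q.2))
    (hquasi : ∀ (w p : Fin N → ℝ) (i j : Fin N), i ≠ j →
      0 ≤ Du f w p i j ∧ Dp f w p i j = 0) (R : ℝ) :
    ∃ L, 0 ≤ L ∧ ∀ a₁ b₁ a₂ b₂ : Fin N → ℝ, ‖a₁‖ ≤ R → ‖b₁‖ ≤ R → ‖a₂‖ ≤ R → ‖b₂‖ ≤ R →
      ∀ i, (∀ j, a₁ j - a₂ j ≤ a₁ i - a₂ i) →
        f a₁ b₁ i - f a₂ b₂ i ≤ L * max |a₁ i - a₂ i| |b₁ i - b₂ i| := by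
  obtain ⟨K, hK⟩ := hf.locallyLipschitz.locallyLipschitzOn.exists_lipschitzOnWith_of_compact
    (isCompact_closedBall (0 : (Fin N → ℝ) × (Fin N → ℝ)) (3 * R))
  refine ⟨K, K.coe_nonneg, fun a₁ b₁ a₂ b₂ ha₁ hb₁ ha₂ hb₂ i hmax => ?_⟩
  set s := a₁ i - a₂ i
  set a := a₂ + fun _ => s
  set b := b₂ + Pi.single i (b₁ i - b₂ i)
  have hconst : ‖(fun _ => s : Fin N → ℝ)‖ ≤ |s| :=
    (pi_norm_le_iff_of_nonneg (abs_nonneg s)).2 fun _ => le_rfl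
  have hsingle : ‖(Pi.single i (b₁ i - b₂ i) : Fin N → ℝ)‖ = |b₁ i - b₂ i| := Pi.norm_single _
  have hdist : dist (a, b) (a₂, b₂) ≤ max |s| |b₁ i - b₂ i| := by
    rw [Prod.dist_eq, dist_eq_norm, dist_eq_norm]
    simp only [a, b, add_sub_cancel_left]
    exact max_le_max hconst hsingle.le
  have hmem : (a, b) ∈ Metric.closedBall 0 (3 * R) ∧ (a₂, b₂) ∈ Metric.closedBall 0 (3 * R) := by
    have habs : ∀ (x : Fin N → ℝ) j, |x j| ≤ ‖x‖ := fun x j => norm_le_pi_norm x j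
    have hs : |s| ≤ 2 * R := (abs_sub _ _).trans (by linarith [habs a₁ i, habs a₂ i])
    have hb : |b₁ i - b₂ i| ≤ 2 * R := (abs_sub _ _).trans (by linarith [habs b₁ i, habs b₂ i])
    have hR : 0 ≤ R := (norm_nonneg a₁).trans ha₁
    simp only [mem_closedBall_zero_iff, Prod.norm_def]
    refine ⟨max_le ?_ ?_, max_le (by linarith) (by linarith)⟩
    · exact (norm_add_le _ _).trans (by linarith)
    · exact (norm_add_le _ _).trans (by linarith)
  have hlip : f a b i - f a₂ b₂ i ≤ K * dist (a, b) (a₂, b₂) :=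
    (le_abs_self _).trans <| (norm_le_pi_norm (f a b - f a₂ b₂) i).trans <|
      (dist_eq_norm (f a b) (f a₂ b₂)).symm.le.trans (hK.dist_le_mul _ hmem.1 _ hmem.2)
  calc f a₁ b₁ i - f a₂ b₂ i ≤ f a b i - f a₂ b₂ i := by
        linarith [apply_le_of_quasimonotone (hf.differentiable one_ne_zero) hquasi (b₁ := b₁)
          (b₂ := b₂) hmax]
    _ ≤ K * max |s| |b₁ i - b₂ i| := hlip.trans (by gcongr)

theorem exists_first_touch {ι : Type*} [Finite ι] {T : ℝ} {w : ι → ℝ → ℝ → ℝ}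
    {φ : ℝ → ℝ → ℝ} (hw : ∀ j, ContinuousOn (fun q : ℝ × ℝ => w j q.1 q.2) (univ ×ˢ Icc 0 T))
    (hφ : Continuous (fun q : ℝ × ℝ => φ q.1 q.2)) (h₀ : ∀ x j, w j x 0 < φ x 0)
    (hbdd : ∃ R, ∀ x, ∀ t ∈ Icc 0 T, ∀ j, φ x t ≤ w j x t → |x| ≤ R)
    (htouch : ∃ x, ∃ t ∈ Icc 0 T, ∃ j, φ x t ≤ w j x t) :
    ∃ x₀, ∃ t₀ ∈ Ioc 0 T, ∃ i, w i x₀ t₀ = φ x₀ t₀ ∧ (∀ x j, w j x t₀ ≤ φ x t₀) ∧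
      ∀ x, ∀ t ∈ Ico 0 t₀, ∀ j, w j x t < φ x t := by
  obtain ⟨R, hR⟩ := hbdd
  set E := ⋃ j, {q ∈ univ ×ˢ Icc 0 T | φ q.1 q.2 ≤ w j q.1 q.2}
  have hE : IsCompact E := by
    refine (isCompact_Icc.prod isCompact_Icc : IsCompact (Icc (-R) R ×ˢ Icc 0 T))
      |>.of_isClosed_subset (isClosed_iUnion_of_finite fun j =>
        (isClosed_univ.prod isClosed_Icc).isClosed_le hφ.continuousOn (hw j)) ?_
    simp only [E, iUnion_subset_iff]
    rintro j ⟨x, t⟩ ⟨⟨-, ht⟩, hj⟩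
    exact ⟨abs_le.1 (hR x t ht j hj), ht⟩
  obtain ⟨x, t, ht, j, hj⟩ := htouch
  obtain ⟨⟨x₀, t₀⟩, hq₀, hmin⟩ :=
    hE.exists_isMinOn ⟨(x, t), mem_iUnion.2 ⟨j, ⟨trivial, ht⟩, hj⟩⟩ continuous_snd.continuousOn
  obtain ⟨i, ⟨-, ht₀⟩, hi⟩ := mem_iUnion.1 hq₀
  have hbefore : ∀ x, ∀ t ∈ Ico 0 t₀, ∀ j, w j x t < φ x t := by
    intro x t ht j
    by_contra! hle
    have hmem : (x, t) ∈ E := mem_iUnion.2 ⟨j, ⟨trivial, ht.1, ht.2.le.trans ht₀.2⟩, hle⟩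
    exact ht.2.not_ge (hmin hmem)
  have ht₀pos : 0 < t₀ := ht₀.1.lt_of_ne fun h => (h₀ x₀ i).not_ge (h ▸ hi)
  have hat : ∀ x j, w j x t₀ ≤ φ x t₀ := by
    intro x j
    have hwt : ContinuousOn (fun t => w j x t) (Icc 0 T) :=
      (hw j).comp (Continuous.prodMk_right x).continuousOn fun t ht => ⟨trivial, ht⟩
    refine ContinuousWithinAt.closure_le (s := Ico 0 t₀)
      (by simp [closure_Ico ht₀pos.ne, ht₀pos.le])
      ((hwt t₀ ht₀).mono (Ico_subset_Icc_self.trans (Icc_subset_Icc_right ht₀.2)))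
      (hφ.comp (Continuous.prodMk_right x)).continuousWithinAt fun t ht => (hbefore x t ht j).le
  exact ⟨x₀, t₀, ⟨ht₀pos, ht₀.2⟩, i, le_antisymm (hat x₀ i) hi, hat, hbefore⟩

theorem abs_le_of_barrier_le {ε K t x M : ℝ} (hε : 0 < ε) (hKt : 0 ≤ K * t)
    (h : ε * rexp (K * t) * (1 + x ^ 2) ≤ 2 * M) : |x| ≤ M / ε := by
  have hexp : ε * (1 + x ^ 2) ≤ ε * rexp (K * t) * (1 + x ^ 2) := by
    rw [mul_right_comm]
    exact le_mul_of_one_le_right (by positivity) (one_le_exp hKt)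
  rw [le_div_iff₀ hε]
  nlinarith [two_mul_abs_le_one_add_sq x]

theorem Matrix.mulVec_apply_of_isDiag {n : Type*} [Fintype n] [DecidableEq n]
    {A : Matrix n n ℝ} (hA : A.IsDiag) (q : n → ℝ) (i : n) : (A *ᵥ q) i = A i i * q i := by
  conv_lhs => rw [← (isDiag_iff_diagonal_diag A).1 hA]
  exact mulVec_diagonal _ _ _

theorem sub_lt_barrier {N : ℕ} {A : Matrix (Fin N) (Fin N) ℝ} (hA : A.IsDiag)
    (hA₀ : ∀ i, 0 ≤ A i i) {f : (Fin N → ℝ) → (Fin N → ℝ) → Fin N → ℝ} {T M L : ℝ}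
    {u v : ℝ → ℝ → Fin N → ℝ}
    (huc : ContinuousOn (fun q : ℝ × ℝ => u q.1 q.2) (univ ×ˢ Icc 0 T))
    (hvc : ContinuousOn (fun q : ℝ × ℝ => v q.1 q.2) (univ ×ˢ Icc 0 T))
    (hubdd : ∀ x, ∀ t ∈ Icc 0 T, ‖u x t‖ ≤ M ∧ ‖deriv (fun y => u y t) x‖ ≤ M)
    (hvbdd : ∀ x, ∀ t ∈ Icc 0 T, ‖v x t‖ ≤ M ∧ ‖deriv (fun y => v y t) x‖ ≤ M)
    (hut : ∀ x, ∀ t ∈ Ioc 0 T, DifferentiableAt ℝ (fun s => u x s) t)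
    (hvt : ∀ x, ∀ t ∈ Ioc 0 T, DifferentiableAt ℝ (fun s => v x s) t)
    (hux : ∀ t ∈ Ioc 0 T, ContDiff ℝ 2 (fun y => u y t))
    (hvx : ∀ t ∈ Ioc 0 T, ContDiff ℝ 2 (fun y => v y t))
    (hsub : ∀ x, ∀ t ∈ Ioc 0 T, ∀ i, deriv (fun s => u x s) t i ≤
      (A *ᵥ deriv (deriv (fun y => u y t)) x + f (u x t) (deriv (fun y => u y t) x)) i)
    (hsup : ∀ x, ∀ t ∈ Ioc 0 T, ∀ i,
      (A *ᵥ deriv (deriv (fun y => v y t)) x + f (v x t) (deriv (fun y => v y t) x)) i ≤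
        deriv (fun s => v x s) t i)
    (hinit : ∀ x i, u x 0 i ≤ v x 0 i) (hL0 : 0 ≤ L)
    (hL : ∀ a₁ b₁ a₂ b₂ : Fin N → ℝ, ‖a₁‖ ≤ M → ‖b₁‖ ≤ M → ‖a₂‖ ≤ M → ‖b₂‖ ≤ M →
      ∀ i, (∀ j, a₁ j - a₂ j ≤ a₁ i - a₂ i) →
        f a₁ b₁ i - f a₂ b₂ i ≤ L * max |a₁ i - a₂ i| |b₁ i - b₂ i|)
    {ε : ℝ} (hε : 0 < ε) (x t : ℝ) (ht : t ∈ Icc 0 T) (i : Fin N) :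
    u x t i - v x t i < ε * rexp ((2 * ∑ j, A j j + L + 1) * t) * (1 + x ^ 2) := by
  set a := ∑ j, A j j
  set K := 2 * a + L + 1
  have ha : 0 ≤ a := Finset.sum_nonneg fun j _ => hA₀ j
  have hK : 0 ≤ K := by linarith
  set φ : ℝ → ℝ → ℝ := fun x t => ε * rexp (K * t) * (1 + x ^ 2)
  have hφpos : ∀ x t, 0 < φ x t := fun x t => by positivity
  have hbdd : ∃ R, ∀ x, ∀ t ∈ Icc 0 T, ∀ j, φ x t ≤ u x t j - v x t j → |x| ≤ R := by
    refine ⟨M / ε, fun x t ht j hj => abs_le_of_barrier_le hε (mul_nonneg hK ht.1) (hj.trans ?_)⟩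
    have hu : |u x t j| ≤ ‖u x t‖ := norm_le_pi_norm (u x t) j
    have hv : |v x t j| ≤ ‖v x t‖ := norm_le_pi_norm (v x t) j
    linarith [le_abs_self (u x t j), neg_abs_le (v x t j), (hubdd x t ht).1, (hvbdd x t ht).1]
  by_contra! hviol
  obtain ⟨x₀, t₀, ht₀, k, heq, hle, hlt⟩ := exists_first_touch
    (w := fun j x t => u x t j - v x t j) (φ := φ) (fun j =>
      ((continuous_apply j).comp_continuousOn huc).sub ((continuous_apply j).comp_continuousOn hvc))
    (by fun_prop) (fun x j => by linarith [hinit x j, hφpos x 0]) hbdd ⟨x, t, ht, i, hviol⟩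
  set c := ε * rexp (K * t₀)
  have hφ₀ : φ x₀ t₀ = c * (1 + x₀ ^ 2) := rfl
  obtain ⟨hdx, hdxx⟩ := deriv_sub_of_isMax_sub_parabola (hux t₀ ht₀) (hvx t₀ ht₀) (c := c)
    (a := x₀) (i := k) fun x => by linarith [hle x k, heq]
  have hdt : K * φ x₀ t₀ ≤ deriv (fun s => u x₀ s) t₀ k - deriv (fun s => v x₀ s) t₀ k := by
    have hKt : HasDerivAt (fun t => K * t) K t₀ := by simpa using (hasDerivAt_id t₀).const_mul K
    have hφ : HasDerivAt (fun t => φ x₀ t) (K * φ x₀ t₀) t₀ :=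
      ((hKt.exp.const_mul ε).mul_const (1 + x₀ ^ 2)).congr_deriv (by ring)
    exact le_deriv_sub_of_le_left hφ (hut x₀ t₀ ht₀) (hvt x₀ t₀ ht₀) ht₀.1
      (fun t ht => (hlt x₀ t ht k).le) heq
  have hf : f (u x₀ t₀) (deriv (fun y => u y t₀) x₀) k - f (v x₀ t₀) (deriv (fun y => v y t₀) x₀) k
      ≤ L * φ x₀ t₀ := by
    have ht₀' := Ioc_subset_Icc_self ht₀
    refine (hL _ _ _ _ (hubdd x₀ t₀ ht₀').1 (hubdd x₀ t₀ ht₀').2 (hvbdd x₀ t₀ ht₀').1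
      (hvbdd x₀ t₀ ht₀').2 k fun j => by linarith [hle x₀ j]).trans
        (mul_le_mul_of_nonneg_left (max_le (by rw [heq, abs_of_pos (hφpos _ _)]) ?_) hL0)
    rw [hdx, hφ₀, abs_mul, abs_of_pos (by positivity : 0 < c), abs_mul, abs_two]
    exact mul_le_mul_of_nonneg_left (two_mul_abs_le_one_add_sq x₀) (by positivity)
  have hAk : A k k ≤ a := Finset.single_le_sum (fun j _ => hA₀ j) (Finset.mem_univ k)
  have hcφ : c ≤ φ x₀ t₀ := le_mul_of_one_le_right (by positivity) (by nlinarith [sq_nonneg x₀])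
  have hsubk := hsub x₀ t₀ ht₀ k
  have hsupk := hsup x₀ t₀ ht₀ k
  rw [Pi.add_apply, mulVec_apply_of_isDiag hA] at hsubk hsupk
  have hKφ : K * φ x₀ t₀ = 2 * a * φ x₀ t₀ + L * φ x₀ t₀ + φ x₀ t₀ := by ring
  linarith [mul_le_mul_of_nonneg_left hdxx (hA₀ k),
    mul_le_mul_of_nonneg_right hAk (by positivity : 0 ≤ 2 * c),
    mul_le_mul_of_nonneg_left hcφ ha, hφpos x₀ t₀]

theorem comparison_principle_general
    (N : ℕ)
    (A : Matrix (Fin N) (Fin N) ℝ)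
    (hAdiag : ∀ i j, i ≠ j → A i j = 0) (hApos : ∀ i, 0 < A i i)
    (f : (Fin N → ℝ) → (Fin N → ℝ) → Fin N → ℝ)
    (hf : ContDiff ℝ 1 (fun q : (Fin N → ℝ) × (Fin N → ℝ) => f q.1 q.2))
    -- quasimonotonicity
    (hquasi : ∀ (w p : Fin N → ℝ) (i j : Fin N), i ≠ j →
      0 ≤ Du f w p i j ∧ Dp f w p i j = 0)
    (T : ℝ)
    (u v : ℝ → ℝ → Fin N → ℝ)
    (huc : ContinuousOn (fun q : ℝ × ℝ => u q.1 q.2) (Set.univ ×ˢ Set.Icc 0 T))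
    (hvc : ContinuousOn (fun q : ℝ × ℝ => v q.1 q.2) (Set.univ ×ˢ Set.Icc 0 T))
    (hubdd : ∃ M, ∀ x : ℝ, ∀ t ∈ Set.Icc (0 : ℝ) T,
      ‖u x t‖ ≤ M ∧ ‖deriv (fun y => u y t) x‖ ≤ M)
    (hvbdd : ∃ M, ∀ x : ℝ, ∀ t ∈ Set.Icc (0 : ℝ) T,
      ‖v x t‖ ≤ M ∧ ‖deriv (fun y => v y t) x‖ ≤ M)
    (hut : ∀ x : ℝ, ∀ t ∈ Set.Ioc (0 : ℝ) T, DifferentiableAt ℝ (fun s => u x s) t)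
    (hvt : ∀ x : ℝ, ∀ t ∈ Set.Ioc (0 : ℝ) T, DifferentiableAt ℝ (fun s => v x s) t)
    (hux : ∀ t ∈ Set.Ioc (0 : ℝ) T, ContDiff ℝ 2 (fun y => u y t))
    (hvx : ∀ t ∈ Set.Ioc (0 : ℝ) T, ContDiff ℝ 2 (fun y => v y t))
    -- u is a subsolution, v a supersolution (componentwise)
    (hsub : ∀ x : ℝ, ∀ t ∈ Set.Ioc (0 : ℝ) T, ∀ i : Fin N,
      deriv (fun s => u x s) t i ≤
        (A.mulVec (deriv (deriv (fun y => u y t)) x)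
          + f (u x t) (deriv (fun y => u y t) x)) i)
    (hsup : ∀ x : ℝ, ∀ t ∈ Set.Ioc (0 : ℝ) T, ∀ i : Fin N,
      (A.mulVec (deriv (deriv (fun y => v y t)) x)
        + f (v x t) (deriv (fun y => v y t) x)) i ≤
        deriv (fun s => v x s) t i)
    (hinit : ∀ x : ℝ, ∀ i : Fin N, u x 0 i ≤ v x 0 i) :
    ∀ x : ℝ, ∀ t ∈ Set.Icc (0 : ℝ) T, ∀ i : Fin N, u x t i ≤ v x t i := by
  obtain ⟨Mu, hMu⟩ := hubdd
  obtain ⟨Mv, hMv⟩ := hvbdd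
  set M := max Mu Mv
  have hMu' : ∀ x, ∀ t ∈ Icc 0 T, ‖u x t‖ ≤ M ∧ ‖deriv (fun y => u y t) x‖ ≤ M := fun x t ht =>
    ⟨(hMu x t ht).1.trans (le_max_left _ _), (hMu x t ht).2.trans (le_max_left _ _)⟩
  have hMv' : ∀ x, ∀ t ∈ Icc 0 T, ‖v x t‖ ≤ M ∧ ‖deriv (fun y => v y t) x‖ ≤ M := fun x t ht =>
    ⟨(hMv x t ht).1.trans (le_max_right _ _), (hMv x t ht).2.trans (le_max_right _ _)⟩
  obtain ⟨L, hL0, hL⟩ := exists_sub_le_of_quasimonotone hf hquasi M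
  intro x t ht i
  refine le_of_forall_pos_lt_add fun δ hδ => ?_
  set C := rexp ((2 * ∑ j, A j j + L + 1) * t) * (1 + x ^ 2)
  have hC : 0 < C := by positivity
  have key := sub_lt_barrier (fun i j h => hAdiag i j h) (fun i => (hApos i).le) huc hvc hMu' hMv'
    hut hvt hux hvx hsub hsup hinit hL0 hL (div_pos hδ hC) x t ht i
  rw [mul_assoc, div_mul_cancel₀ δ hC.ne'] at key
  linarith

/-- comparison principle for the quasimonotone
reaction–diffusion–convection system u_t = A u_xx + f(u, u_x): if u is a
subsolution and v a supersolution with u(·,0) ≤ v(·,0) componentwise, then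
u ≤ v componentwise on ℝ × [0,T]. -/
theorem comparison_principle
    (N : ℕ) (hN : 1 ≤ N)
    (A : Matrix (Fin N) (Fin N) ℝ)
    (hAdiag : ∀ i j, i ≠ j → A i j = 0) (hApos : ∀ i, 0 < A i i)
    (f : (Fin N → ℝ) → (Fin N → ℝ) → Fin N → ℝ)
    (hf : ContDiff ℝ 1 (fun q : (Fin N → ℝ) × (Fin N → ℝ) => f q.1 q.2))
    -- quasimonotonicity
    (hquasi : ∀ (w p : Fin N → ℝ) (i j : Fin N), i ≠ j →
      0 ≤ Du f w p i j ∧ Dp f w p i j = 0)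
    (T : ℝ) (hT : 0 < T)
    (u v : ℝ → ℝ → Fin N → ℝ)
    (huc : ContinuousOn (fun q : ℝ × ℝ => u q.1 q.2) (Set.univ ×ˢ Set.Icc 0 T))
    (hvc : ContinuousOn (fun q : ℝ × ℝ => v q.1 q.2) (Set.univ ×ˢ Set.Icc 0 T))
    (hubdd : ∃ M, ∀ x : ℝ, ∀ t ∈ Set.Icc (0 : ℝ) T,
      ‖u x t‖ ≤ M ∧ ‖deriv (fun y => u y t) x‖ ≤ M)
    (hvbdd : ∃ M, ∀ x : ℝ, ∀ t ∈ Set.Icc (0 : ℝ) T,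
      ‖v x t‖ ≤ M ∧ ‖deriv (fun y => v y t) x‖ ≤ M)
    (hut : ∀ x : ℝ, ∀ t ∈ Set.Ioc (0 : ℝ) T, DifferentiableAt ℝ (fun s => u x s) t)
    (hvt : ∀ x : ℝ, ∀ t ∈ Set.Ioc (0 : ℝ) T, DifferentiableAt ℝ (fun s => v x s) t)
    (hux : ∀ t ∈ Set.Ioc (0 : ℝ) T, ContDiff ℝ 2 (fun y => u y t))
    (hvx : ∀ t ∈ Set.Ioc (0 : ℝ) T, ContDiff ℝ 2 (fun y => v y t))
    -- u is a subsolution, v a supersolution (componentwise)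
    (hsub : ∀ x : ℝ, ∀ t ∈ Set.Ioc (0 : ℝ) T, ∀ i : Fin N,
      deriv (fun s => u x s) t i ≤
        (A.mulVec (deriv (deriv (fun y => u y t)) x)
          + f (u x t) (deriv (fun y => u y t) x)) i)
    (hsup : ∀ x : ℝ, ∀ t ∈ Set.Ioc (0 : ℝ) T, ∀ i : Fin N,
      (A.mulVec (deriv (deriv (fun y => v y t)) x)
        + f (v x t) (deriv (fun y => v y t) x)) i ≤
        deriv (fun s => v x s) t i)
    (hinit : ∀ x : ℝ, ∀ i : Fin N, u x 0 i ≤ v x 0 i) :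
    ∀ x : ℝ, ∀ t ∈ Set.Icc (0 : ℝ) T, ∀ i : Fin N, u x t i ≤ v x t i :=
  comparison_principle_general N A hAdiag hApos f hf hquasi T u v huc hvc hubdd hvbdd hut hvt hux
    hvx hsub hsup hinit
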